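/- (Q fixed point for MFCG at frozen global distribution.) Under Assumption (Lip3), L_p^glob + L_p^loc < |𝒳|c_min, and assuming φ|𝒜|·(L_f^loc + (γ/(1−γ))L_p^loc‖f‖∞)/(|𝒳|c_min − L_p^loc) < 1 − γ, for every fixed μ ∈ Δ(𝒳) the map Q ↦ B_{μ, μ'*_{Q,μ}}Q maps the ball 𝔅 = {Q : ‖Q‖∞ ≤ ‖f‖∞/(1−γ)} into itself and satisfies, for Q, Q' ∈ 𝔅, ‖B_{μ,μ'*_{Q,μ}}Q − B_{μ,μ'*_{Q',μ}}Q'‖∞ ≤ k‖Q − Q'‖∞ with k = γ + (L_f^loc + (γ/(1−γ))L_p^loc‖f‖∞)·φ|𝒜|/(|𝒳|c_min − L_p^loc) < 1; consequently it has a unique fixed point Q*_μ in 𝔅. -/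

import Mathlib

/-!
For a frozen global distribution `μ`, the local fixed point `μ'*_{Q,μ}` depends Lipschitz-continuously
on `Q`: writing `ν - ν'` through the fixed-point equations, Dobrushin's estimate contracts the part
coming from `ν - ν'` by `1 - |𝒳| c_min`, the local dependence of `p` adds `L_p^loc ‖ν - ν'‖₁`, and the
softmin (which is `φ`-Lipschitz coordinatewise) contributes `φ |𝒜| ‖Q - Q'‖∞`. Feeding this into the
Bellman operator, whose dependence on `Q` is `γ`-Lipschitz and on `μ'` is controlled by `L_f^loc` and
`L_p^loc ‖f‖∞ / (1 - γ)` on the ball, gives the contraction constant `k`, and Banach's theorem on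
the closed ball finishes the proof.
-/

open Finset Filter
open scoped Classical

noncomputable section

variable {X A : Type*}

/-- A probability vector on a finite set. -/
def IsProb [Fintype X] (μ : X → ℝ) : Prop := (∀ x, 0 ≤ μ x) ∧ ∑ x, μ x = 1

/-- ℓ¹ norm of a signed measure / vector on a finite set. -/
def l1 [Fintype X] (μ : X → ℝ) : ℝ := ∑ x, |μ x|

/-- Sup norm of a Q-table. -/
def supQ [Fintype X] [Fintype A] [Nonempty X] [Nonempty A] (Q : X → A → ℝ) : ℝ :=
  Finset.univ.sup' Finset.univ_nonempty (fun xa : X × A => |Q xa.1 xa.2|)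

/-- Minimum of a row of a Q-table (minimum over actions). -/
def minRow [Fintype A] [Nonempty A] (q : A → ℝ) : ℝ :=
  Finset.univ.inf' Finset.univ_nonempty q

/-- The soft-min distribution over actions with parameter φ. -/
def softmin [Fintype A] (φ : ℝ) (z : A → ℝ) (a : A) : ℝ :=
  Real.exp (-φ * z a) / ∑ a', Real.exp (-φ * z a')

/-- The argmin_e policy: uniform over the minimizers, zero elsewhere. -/
def argminE [Fintype A] [Nonempty A] (q : A → ℝ) (a : A) : ℝ :=
  if q a = minRow q then (1 : ℝ) / (Finset.univ.filter fun a' => q a' = minRow q).card else 0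

/-- (P^{π,μ,μ'} ν)(x) = ∑_{x₁} ν(x₁) ∑_a π(a|x₁) p(x|x₁,a,μ,μ') for a kernel with a
global distribution μ and a local distribution μ'. -/
def Ppush3 [Fintype X] [Fintype A] (p : X → A → (X → ℝ) → (X → ℝ) → X → ℝ)
    (π : X → A → ℝ) (μ μ' ν : X → ℝ) (x : X) : ℝ :=
  ∑ x1, ν x1 * ∑ a, π x1 a * p x1 a μ μ' x

/-- The Bellman operator (B_{μ,μ'} Q)(x,a) = f(x,a,μ,μ') + γ ∑_{x'} p(x'|x,a,μ,μ') min_{a'} Q(x',a'). -/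
def bell3 [Fintype X] [Fintype A] [Nonempty A]
    (f : X → A → (X → ℝ) → (X → ℝ) → ℝ) (p : X → A → (X → ℝ) → (X → ℝ) → X → ℝ)
    (γ : ℝ) (μ μ' : X → ℝ) (Q : X → A → ℝ) (x : X) (a : A) : ℝ :=
  f x a μ μ' + γ * ∑ x', p x a μ μ' x' * minRow (Q x')

section TableNorm
variable [Fintype X] [Fintype A]

theorem abs_apply_apply_le_norm (Q : X → A → ℝ) (x : X) (a : A) : |Q x a| ≤ ‖Q‖ :=
  (norm_le_pi_norm (Q x) a).trans (norm_le_pi_norm Q x)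

theorem norm_le_of_forall_abs_apply_apply_le [Nonempty X] [Nonempty A] {Q : X → A → ℝ} {r : ℝ}
    (h : ∀ x a, |Q x a| ≤ r) : ‖Q‖ ≤ r :=
  (pi_norm_le_iff_of_nonempty _).2 fun x => (pi_norm_le_iff_of_nonempty _).2 fun a => h x a

theorem supQ_eq_norm [Nonempty X] [Nonempty A] (Q : X → A → ℝ) : supQ Q = ‖Q‖ :=
  le_antisymm (Finset.sup'_le _ _ fun xa _ => abs_apply_apply_le_norm Q xa.1 xa.2)
    (norm_le_of_forall_abs_apply_apply_le fun x a =>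
      Finset.le_sup' (fun xa : X × A => |Q xa.1 xa.2|) (mem_univ (x, a)))

end TableNorm

section MinRow
variable [Fintype A] [Nonempty A]

theorem minRow_le_minRow_add_norm_sub (q q' : A → ℝ) : minRow q ≤ minRow q' + ‖q - q'‖ := by
  suffices minRow q - ‖q - q'‖ ≤ minRow q' by linarith
  refine Finset.le_inf' _ _ fun a _ => ?_
  have hq : minRow q ≤ q a := Finset.inf'_le q (mem_univ a)
  have hdiff : q a - q' a ≤ ‖q - q'‖ := (abs_le.1 (norm_le_pi_norm (q - q') a)).2
  linarith

theorem abs_minRow_sub_le (q q' : A → ℝ) : |minRow q - minRow q'| ≤ ‖q - q'‖ := by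
  have h := minRow_le_minRow_add_norm_sub q q'
  have h' := minRow_le_minRow_add_norm_sub q' q
  rw [norm_sub_rev] at h'
  exact abs_sub_le_iff.2 ⟨by linarith, by linarith⟩

theorem abs_minRow_le (q : A → ℝ) : |minRow q| ≤ ‖q‖ := by
  simpa [minRow] using abs_minRow_sub_le q 0

end MinRow

section Stochastic
variable {ι κ : Type*} [Fintype ι] [Fintype κ]

theorem l1_nonneg (δ : ι → ℝ) : 0 ≤ l1 δ :=
  Finset.sum_nonneg fun _ _ => abs_nonneg _

theorem isProb_const_inv_card [Nonempty ι] : IsProb (fun _ : ι => (Fintype.card ι : ℝ)⁻¹) :=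
  ⟨fun _ => by positivity, by simp⟩

theorem IsProb.le_sum_mul {w v : ι → ℝ} {c : ℝ} (hw : IsProb w) (hv : ∀ i, c ≤ v i) :
    c ≤ ∑ i, w i * v i := by
  calc c = ∑ i, w i * c := by rw [← Finset.sum_mul, hw.2, one_mul]
    _ ≤ ∑ i, w i * v i := Finset.sum_le_sum fun i _ => mul_le_mul_of_nonneg_left (hv i) (hw.1 i)

theorem IsProb.sum_mul_le {w v : ι → ℝ} {c : ℝ} (hw : IsProb w) (hv : ∀ i, v i ≤ c) :
    ∑ i, w i * v i ≤ c := by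
  calc ∑ i, w i * v i ≤ ∑ i, w i * c :=
        Finset.sum_le_sum fun i _ => mul_le_mul_of_nonneg_left (hv i) (hw.1 i)
    _ = c := by rw [← Finset.sum_mul, hw.2, one_mul]

theorem IsProb.abs_sum_mul_le {w v : ι → ℝ} {c : ℝ} (hw : IsProb w) (hv : ∀ i, |v i| ≤ c) :
    |∑ i, w i * v i| ≤ c := by
  calc |∑ i, w i * v i| ≤ ∑ i, |w i * v i| := Finset.abs_sum_le_sum_abs _ _
    _ = ∑ i, w i * |v i| := by simp only [abs_mul, abs_of_nonneg (hw.1 _)]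
    _ ≤ c := hw.sum_mul_le hv

theorem IsProb.sub_sum_eq_zero {w w' : ι → ℝ} (hw : IsProb w) (hw' : IsProb w') :
    ∑ i, (w i - w' i) = 0 := by
  rw [Finset.sum_sub_distrib, hw.2, hw'.2, sub_self]

theorem IsProb.sum_sum_mul {w : ι → ℝ} {K : ι → κ → ℝ} (hw : IsProb w)
    (hK : ∀ i, ∑ j, K i j = 1) : ∑ j, ∑ i, w i * K i j = 1 := by
  rw [Finset.sum_comm]
  simp only [← Finset.mul_sum, hK, mul_one, hw.2]

theorem IsProb.sum_abs_sum_mul_sub_le {w : ι → ℝ} {K K' : ι → κ → ℝ} {ε : ℝ} (hw : IsProb w)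
    (h : ∀ i, ∑ j, |K i j - K' i j| ≤ ε) :
    ∑ j, |∑ i, w i * (K i j - K' i j)| ≤ ε := by
  calc ∑ j, |∑ i, w i * (K i j - K' i j)| ≤ ∑ j, ∑ i, w i * |K i j - K' i j| := by
        refine Finset.sum_le_sum fun j _ => (Finset.abs_sum_le_sum_abs _ _).trans_eq ?_
        simp only [abs_mul, abs_of_nonneg (hw.1 _)]
    _ = ∑ i, w i * ∑ j, |K i j - K' i j| := by rw [Finset.sum_comm]; simp only [Finset.mul_sum]
    _ ≤ ε := hw.sum_mul_le h

/-- Dobrushin's estimate: on vectors of total mass zero, `K` acts like the nonnegative matrix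
`K - c`, whose rows have mass `1 - |κ| c`. -/
theorem sum_abs_sum_mul_le_of_sum_eq_zero {δ : ι → ℝ} {K : ι → κ → ℝ} {c : ℝ}
    (hδ : ∑ i, δ i = 0) (hc : ∀ i j, c ≤ K i j) (hK : ∀ i, ∑ j, K i j = 1) :
    ∑ j, |∑ i, δ i * K i j| ≤ (1 - Fintype.card κ * c) * l1 δ := by
  have hshift : ∀ j, ∑ i, δ i * K i j = ∑ i, δ i * (K i j - c) := fun j => by
    simp only [mul_sub, Finset.sum_sub_distrib, ← Finset.sum_mul, hδ, zero_mul, sub_zero]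
  calc ∑ j, |∑ i, δ i * K i j| ≤ ∑ j, ∑ i, |δ i| * (K i j - c) := by
        refine Finset.sum_le_sum fun j _ => ?_
        rw [hshift]
        refine (Finset.abs_sum_le_sum_abs _ _).trans_eq ?_
        simp only [abs_mul, abs_of_nonneg (sub_nonneg.2 (hc _ j))]
    _ = ∑ i, |δ i| * (1 - Fintype.card κ * c) := by
        rw [Finset.sum_comm]
        simp only [← Finset.mul_sum, Finset.sum_sub_distrib, hK, Finset.sum_const, card_univ,
          nsmul_eq_mul]
    _ = (1 - Fintype.card κ * c) * l1 δ := by rw [l1, ← Finset.sum_mul, mul_comm]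

/-- The factor `s a (1 - s a) ≤ 1/4` is what keeps the Lipschitz constant of softmin at `φ`. -/
theorem IsProb.abs_mul_sum_mul_sub_le {s w : ι → ℝ} {M : ℝ} (hs : IsProb s) (a : ι)
    (hw : ∀ b, |w b - w a| ≤ 2 * M) : |s a * ∑ b, s b * (w b - w a)| ≤ M := by
  have hM : 0 ≤ M := by linarith [abs_nonneg (w a - w a), hw a]
  have hrest : ∑ b ∈ univ.erase a, s b = 1 - s a := by
    rw [← hs.2, ← Finset.sum_erase_add _ _ (mem_univ a), add_sub_cancel_right]
  have hsum : |∑ b, s b * (w b - w a)| ≤ 2 * M * (1 - s a) := by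
    rw [← Finset.sum_erase_add _ _ (mem_univ a), sub_self, mul_zero, add_zero, ← hrest,
      Finset.mul_sum]
    refine (Finset.abs_sum_le_sum_abs _ _).trans (Finset.sum_le_sum fun b _ => ?_)
    rw [abs_mul, abs_of_nonneg (hs.1 b), mul_comm]
    exact mul_le_mul_of_nonneg_right (hw b) (hs.1 b)
  rw [abs_mul, abs_of_nonneg (hs.1 a)]
  nlinarith [mul_le_mul_of_nonneg_left hsum (hs.1 a), mul_nonneg hM (sq_nonneg (2 * s a - 1))]

end Stochastic

section Softmin
variable [Fintype A] [Nonempty A]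

theorem isProb_softmin (φ : ℝ) (z : A → ℝ) : IsProb (softmin φ z) := by
  have hD : 0 < ∑ a', Real.exp (-φ * z a') :=
    Finset.sum_pos (fun _ _ => Real.exp_pos _) univ_nonempty
  refine ⟨fun a => div_nonneg (Real.exp_pos _).le hD.le, ?_⟩
  simp only [softmin, ← Finset.sum_div]
  exact div_self hD.ne'

theorem hasDerivAt_softmin_add_smul (φ : ℝ) (z w : A → ℝ) (a : A) (t : ℝ) :
    HasDerivAt (fun t => softmin φ (z + t • w) a)
      (φ * softmin φ (z + t • w) a * ∑ b, softmin φ (z + t • w) b * (w b - w a)) t := by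
  have hN : ∀ b, HasDerivAt (fun t => Real.exp (-φ * (z + t • w) b))
      (Real.exp (-φ * (z + t • w) b) * (-φ * w b)) t := fun b => by
    simpa using (((hasDerivAt_id t).mul_const (w b)).const_add (z b)).const_mul (-φ) |>.exp
  have hD : 0 < ∑ b, Real.exp (-φ * (z + t • w) b) :=
    Finset.sum_pos (fun _ _ => Real.exp_pos _) univ_nonempty
  refine ((hN a).fun_div (HasDerivAt.fun_sum fun b _ => hN b) hD.ne').congr_deriv ?_
  generalize z + t • w = v at hD ⊢
  have hmean : ∑ b, softmin φ v b * (w b - w a)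
      = (∑ b, Real.exp (-φ * v b) * w b) / ∑ b, Real.exp (-φ * v b) - w a := by
    simp only [mul_sub, Finset.sum_sub_distrib, ← Finset.sum_mul, (isProb_softmin φ v).2, one_mul]
    simp only [softmin, div_mul_eq_mul_div, ← Finset.sum_div]
  have hlin : ∑ b, Real.exp (-φ * v b) * (-φ * w b) = -φ * ∑ b, Real.exp (-φ * v b) * w b := by
    rw [Finset.mul_sum]; exact Finset.sum_congr rfl fun b _ => by ring
  rw [hmean, hlin, softmin]
  field_simp
  ring

theorem abs_softmin_sub_le {φ : ℝ} (hφ : 0 ≤ φ) (z z' : A → ℝ) (a : A) :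
    |softmin φ z a - softmin φ z' a| ≤ φ * ‖z - z'‖ := by
  have hderiv : ∀ t : ℝ, |φ * softmin φ (z' + t • (z - z')) a
      * ∑ b, softmin φ (z' + t • (z - z')) b * ((z - z') b - (z - z') a)| ≤ φ * ‖z - z'‖ := by
    intro t
    rw [mul_assoc, abs_mul, abs_of_nonneg hφ]
    refine mul_le_mul_of_nonneg_left ((isProb_softmin φ _).abs_mul_sum_mul_sub_le a fun b => ?_) hφ
    calc |(z - z') b - (z - z') a| ≤ ‖(z - z') b‖ + ‖(z - z') a‖ := abs_sub _ _
      _ ≤ 2 * ‖z - z'‖ := by linarith [norm_le_pi_norm (z - z') a, norm_le_pi_norm (z - z') b]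
  simpa using norm_image_sub_le_of_norm_deriv_le_segment_01'
    (fun t _ => (hasDerivAt_softmin_add_smul φ z' (z - z') a t).hasDerivWithinAt)
    (fun t _ => hderiv t)

theorem l1_softmin_sub_le {φ : ℝ} (hφ : 0 ≤ φ) (z z' : A → ℝ) :
    l1 (fun a => softmin φ z a - softmin φ z' a) ≤ φ * Fintype.card A * ‖z - z'‖ := by
  calc l1 (fun a => softmin φ z a - softmin φ z' a) ≤ ∑ _a : A, φ * ‖z - z'‖ :=
        Finset.sum_le_sum fun a _ => abs_softmin_sub_le hφ z z' a
    _ = φ * Fintype.card A * ‖z - z'‖ := by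
        rw [Finset.sum_const, card_univ, nsmul_eq_mul]; ring

end Softmin

/-- The kernel `P^{Q,μ,μ'}(x, x')`. -/
def softminKernel [Fintype A] (p : X → A → (X → ℝ) → (X → ℝ) → X → ℝ) (φ : ℝ)
    (Q : X → A → ℝ) (μ μ' : X → ℝ) (x x' : X) : ℝ :=
  ∑ a, softmin φ (Q x) a * p x a μ μ' x'

section Kernel
variable [Fintype X] [Fintype A] [Nonempty A] {p : X → A → (X → ℝ) → (X → ℝ) → X → ℝ}
  {φ : ℝ} {μ ν ν' : X → ℝ}

theorem le_softminKernel {cmin : ℝ}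
    (hcmin : ∀ x a μ μ' x', IsProb μ → IsProb μ' → cmin ≤ p x a μ μ' x')
    (hμ : IsProb μ) (hν : IsProb ν) (Q : X → A → ℝ) (x x' : X) :
    cmin ≤ softminKernel p φ Q μ ν x x' :=
  (isProb_softmin φ (Q x)).le_sum_mul fun a => hcmin x a μ ν x' hμ hν

theorem sum_softminKernel (hp1 : ∀ x a μ μ', IsProb μ → IsProb μ' → ∑ x', p x a μ μ' x' = 1)
    (hμ : IsProb μ) (hν : IsProb ν) (Q : X → A → ℝ) (x : X) :
    ∑ x', softminKernel p φ Q μ ν x x' = 1 :=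
  (isProb_softmin φ (Q x)).sum_sum_mul fun a => hp1 x a μ ν hμ hν

theorem sum_abs_softminKernel_sub_local_le {Lploc : ℝ}
    (hLploc : ∀ x a μ μ' μ'₁, IsProb μ → IsProb μ' → IsProb μ'₁ →
      ∑ x', |p x a μ μ' x' - p x a μ μ'₁ x'| ≤ Lploc * l1 (fun y => μ' y - μ'₁ y))
    (hμ : IsProb μ) (hν : IsProb ν) (hν' : IsProb ν') (Q : X → A → ℝ) (x : X) :
    ∑ x', |softminKernel p φ Q μ ν x x' - softminKernel p φ Q μ ν' x x'|
      ≤ Lploc * l1 (fun y => ν y - ν' y) := by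
  simp only [softminKernel, ← Finset.sum_sub_distrib, ← mul_sub]
  exact (isProb_softmin φ (Q x)).sum_abs_sum_mul_sub_le fun a => hLploc x a μ ν ν' hμ hν hν'

theorem sum_abs_softminKernel_sub_table_le (hφ : 0 ≤ φ)
    (hp0 : ∀ x a μ μ' x', IsProb μ → IsProb μ' → 0 ≤ p x a μ μ' x')
    (hp1 : ∀ x a μ μ', IsProb μ → IsProb μ' → ∑ x', p x a μ μ' x' = 1)
    (hμ : IsProb μ) (hν : IsProb ν) (Q Q' : X → A → ℝ) (x : X) :
    ∑ x', |softminKernel p φ Q μ ν x x' - softminKernel p φ Q' μ ν x x'|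
      ≤ φ * Fintype.card A * ‖Q - Q'‖ := by
  simp only [softminKernel, ← Finset.sum_sub_distrib, ← sub_mul]
  calc _ ≤ (1 - Fintype.card X * 0) * l1 (fun a => softmin φ (Q x) a - softmin φ (Q' x) a) :=
        sum_abs_sum_mul_le_of_sum_eq_zero
          ((isProb_softmin φ (Q x)).sub_sum_eq_zero (isProb_softmin φ (Q' x)))
          (fun a x' => hp0 x a μ ν x' hμ hν) fun a => hp1 x a μ ν hμ hν
    _ ≤ φ * Fintype.card A * ‖Q x - Q' x‖ := by
        rw [mul_zero, sub_zero, one_mul]; exact l1_softmin_sub_le hφ (Q x) (Q' x)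
    _ ≤ φ * Fintype.card A * ‖Q - Q'‖ := by
        gcongr; exact norm_le_pi_norm (Q - Q') x

theorem mul_l1_sub_le_of_Ppush3_eq {cmin Lploc : ℝ} (hφ : 0 ≤ φ)
    (hp0 : ∀ x a μ μ' x', IsProb μ → IsProb μ' → 0 ≤ p x a μ μ' x')
    (hp1 : ∀ x a μ μ', IsProb μ → IsProb μ' → ∑ x', p x a μ μ' x' = 1)
    (hcmin : ∀ x a μ μ' x', IsProb μ → IsProb μ' → cmin ≤ p x a μ μ' x')
    (hLploc : ∀ x a μ μ' μ'₁, IsProb μ → IsProb μ' → IsProb μ'₁ →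
      ∑ x', |p x a μ μ' x' - p x a μ μ'₁ x'| ≤ Lploc * l1 (fun y => μ' y - μ'₁ y))
    (hμ : IsProb μ) (hν : IsProb ν) (hν' : IsProb ν') {Q Q' : X → A → ℝ}
    (hfix : Ppush3 p (fun x => softmin φ (Q x)) μ ν ν = ν)
    (hfix' : Ppush3 p (fun x => softmin φ (Q' x)) μ ν' ν' = ν') :
    (Fintype.card X * cmin - Lploc) * l1 (fun y => ν y - ν' y)
      ≤ φ * Fintype.card A * ‖Q - Q'‖ := by
  set P₁ := softminKernel p φ Q μ ν
  set P₂ := softminKernel p φ Q μ ν'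
  set P₃ := softminKernel p φ Q' μ ν'
  have hsplit : ∀ x', ν x' - ν' x' = ∑ x, (ν x - ν' x) * P₁ x x'
      + ∑ x, ν' x * (P₁ x x' - P₂ x x') + ∑ x, ν' x * (P₂ x x' - P₃ x x') := fun x' => by
    rw [← congrFun hfix x', ← congrFun hfix' x']
    simp only [Ppush3, ← Finset.sum_add_distrib, ← Finset.sum_sub_distrib]
    exact Finset.sum_congr rfl fun x _ => by simp only [P₁, P₂, P₃, softminKernel]; ring
  have h₁ : ∑ x', |∑ x, (ν x - ν' x) * P₁ x x'|
      ≤ (1 - Fintype.card X * cmin) * l1 (fun y => ν y - ν' y) :=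
    sum_abs_sum_mul_le_of_sum_eq_zero (hν.sub_sum_eq_zero hν')
      (le_softminKernel hcmin hμ hν Q) (sum_softminKernel hp1 hμ hν Q)
  have h₂ : ∑ x', |∑ x, ν' x * (P₁ x x' - P₂ x x')| ≤ Lploc * l1 (fun y => ν y - ν' y) :=
    hν'.sum_abs_sum_mul_sub_le (sum_abs_softminKernel_sub_local_le hLploc hμ hν hν' Q)
  have h₃ : ∑ x', |∑ x, ν' x * (P₂ x x' - P₃ x x')| ≤ φ * Fintype.card A * ‖Q - Q'‖ :=
    hν'.sum_abs_sum_mul_sub_le (sum_abs_softminKernel_sub_table_le hφ hp0 hp1 hμ hν' Q Q')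
  have htri : l1 (fun y => ν y - ν' y) ≤ ∑ x', |∑ x, (ν x - ν' x) * P₁ x x'|
      + ∑ x', |∑ x, ν' x * (P₁ x x' - P₂ x x')| + ∑ x', |∑ x, ν' x * (P₂ x x' - P₃ x x')| := by
    simp only [l1, ← Finset.sum_add_distrib]
    exact Finset.sum_le_sum fun x' _ => (hsplit x').symm ▸ abs_add_three _ _ _
  linarith

end Kernel

section Bellman
variable [Fintype X] [Fintype A] [Nonempty X] [Nonempty A] {f : X → A → (X → ℝ) → (X → ℝ) → ℝ}
  {p : X → A → (X → ℝ) → (X → ℝ) → X → ℝ} {γ : ℝ} {μ ν ν' : X → ℝ}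

theorem norm_bell3_le {fnorm : ℝ} (hγ0 : 0 ≤ γ) (hγ1 : γ < 1)
    (hf : ∀ x a, |f x a μ ν| ≤ fnorm) (hp : ∀ x a, IsProb (p x a μ ν)) {Q : X → A → ℝ}
    (hQ : ‖Q‖ ≤ fnorm / (1 - γ)) : ‖bell3 f p γ μ ν Q‖ ≤ fnorm / (1 - γ) := by
  have hfix : fnorm + γ * (fnorm / (1 - γ)) = fnorm / (1 - γ) := by
    field_simp [(sub_pos.2 hγ1).ne']; ring
  refine norm_le_of_forall_abs_apply_apply_le fun x a => ?_
  have hnext : |∑ x', p x a μ ν x' * minRow (Q x')| ≤ fnorm / (1 - γ) :=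
    (hp x a).abs_sum_mul_le fun x' =>
      ((abs_minRow_le (Q x')).trans (norm_le_pi_norm Q x')).trans hQ
  calc |bell3 f p γ μ ν Q x a| ≤ fnorm + γ * (fnorm / (1 - γ)) := by
        refine (abs_add_le _ _).trans (add_le_add (hf x a) ?_)
        rw [abs_mul, abs_of_nonneg hγ0]
        exact mul_le_mul_of_nonneg_left hnext hγ0
    _ = fnorm / (1 - γ) := hfix

theorem norm_bell3_sub_le {Lfloc Lploc : ℝ} (hγ0 : 0 ≤ γ) (hp : ∀ x a, IsProb (p x a μ ν))
    (hf : ∀ x a, |f x a μ ν - f x a μ ν'| ≤ Lfloc * l1 (fun y => ν y - ν' y))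
    (hpν : ∀ x a, ∑ x', |p x a μ ν x' - p x a μ ν' x'| ≤ Lploc * l1 (fun y => ν y - ν' y))
    (Q Q' : X → A → ℝ) :
    ‖bell3 f p γ μ ν Q - bell3 f p γ μ ν' Q'‖
      ≤ γ * ‖Q - Q'‖ + (Lfloc + γ * Lploc * ‖Q'‖) * l1 (fun y => ν y - ν' y) := by
  refine norm_le_of_forall_abs_apply_apply_le fun x a => ?_
  set G := l1 (fun y => ν y - ν' y)
  have hsame : |∑ x', p x a μ ν x' * (minRow (Q x') - minRow (Q' x'))| ≤ ‖Q - Q'‖ :=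
    (hp x a).abs_sum_mul_le fun x' =>
      (abs_minRow_sub_le (Q x') (Q' x')).trans (norm_le_pi_norm (Q - Q') x')
  have hshift : |∑ x', (p x a μ ν x' - p x a μ ν' x') * minRow (Q' x')| ≤ Lploc * G * ‖Q'‖ := by
    refine (Finset.abs_sum_le_sum_abs _ _).trans ?_
    calc ∑ x', |(p x a μ ν x' - p x a μ ν' x') * minRow (Q' x')|
        ≤ ∑ x', |p x a μ ν x' - p x a μ ν' x'| * ‖Q'‖ := by
          refine Finset.sum_le_sum fun x' _ => ?_
          rw [abs_mul]
          exact mul_le_mul_of_nonneg_left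
            ((abs_minRow_le (Q' x')).trans (norm_le_pi_norm Q' x')) (abs_nonneg _)
      _ ≤ Lploc * G * ‖Q'‖ := by
          rw [← Finset.sum_mul]; exact mul_le_mul_of_nonneg_right (hpν x a) (norm_nonneg _)
  have hsplit : bell3 f p γ μ ν Q x a - bell3 f p γ μ ν' Q' x a
      = (f x a μ ν - f x a μ ν') + γ * (∑ x', p x a μ ν x' * (minRow (Q x') - minRow (Q' x'))
        + ∑ x', (p x a μ ν x' - p x a μ ν' x') * minRow (Q' x')) := by
    have hsum : ∑ x', p x a μ ν x' * minRow (Q x') - ∑ x', p x a μ ν' x' * minRow (Q' x')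
        = ∑ x', p x a μ ν x' * (minRow (Q x') - minRow (Q' x'))
          + ∑ x', (p x a μ ν x' - p x a μ ν' x') * minRow (Q' x') := by
      rw [← Finset.sum_add_distrib, ← Finset.sum_sub_distrib]
      exact Finset.sum_congr rfl fun x' _ => by ring
    rw [bell3, bell3]
    linear_combination γ * hsum
  calc |(bell3 f p γ μ ν Q - bell3 f p γ μ ν' Q') x a|
      ≤ Lfloc * G + γ * (‖Q - Q'‖ + Lploc * G * ‖Q'‖) := by
        rw [Pi.sub_apply, Pi.sub_apply, hsplit]
        refine (abs_add_le _ _).trans (add_le_add (hf x a) ?_)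
        rw [abs_mul, abs_of_nonneg hγ0]
        exact mul_le_mul_of_nonneg_left ((abs_add_le _ _).trans (add_le_add hsame hshift)) hγ0
    _ = γ * ‖Q - Q'‖ + (Lfloc + γ * Lploc * ‖Q'‖) * G := by ring

end Bellman

theorem existsUnique_fixedPoint_of_norm_le {E : Type*} [NormedAddCommGroup E] [CompleteSpace E]
    {T : E → E} {R k : ℝ} (hR : 0 ≤ R) (hk : k < 1) (hmaps : ∀ x, ‖x‖ ≤ R → ‖T x‖ ≤ R)
    (hlip : ∀ x y, ‖x‖ ≤ R → ‖y‖ ≤ R → ‖T x - T y‖ ≤ k * ‖x - y‖) :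
    ∃! x, ‖x‖ ≤ R ∧ T x = x := by
  have hball : Set.MapsTo T (Metric.closedBall 0 R) (Metric.closedBall 0 R) := fun x hx => by
    simpa using hmaps x (by simpa using hx)
  have hT : ContractingWith k.toNNReal (hball.restrict T _ _) := by
    refine ⟨by simpa using hk, LipschitzWith.of_dist_le_mul fun x y => ?_⟩
    have hxy := hlip x y (mem_closedBall_zero_iff.1 x.2) (mem_closedBall_zero_iff.1 y.2)
    rw [Subtype.dist_eq, Subtype.dist_eq, dist_eq_norm, dist_eq_norm]
    exact hxy.trans (mul_le_mul_of_nonneg_right (Real.le_coe_toNNReal k) (norm_nonneg _))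
  obtain ⟨y, hyR, hy, -⟩ := hT.exists_fixedPoint' Metric.isClosed_closedBall.isComplete hball
    (Metric.mem_closedBall_self hR) (edist_ne_top _ _)
  rw [mem_closedBall_zero_iff] at hyR
  refine ⟨y, ⟨hyR, hy⟩, fun z ⟨hzR, hz⟩ => ?_⟩
  have hzy := hlip z y hzR hyR
  rw [hz, hy.eq] at hzy
  exact sub_eq_zero.1 (norm_le_zero_iff.1 (by nlinarith [norm_nonneg (z - y)]))

theorem mfcg_Q_fixed_point_general [Fintype X] [Fintype A] [Nonempty X] [Nonempty A]
    (γ : ℝ) (hγ0 : 0 < γ) (hγ1 : γ < 1)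
    (f : X → A → (X → ℝ) → (X → ℝ) → ℝ) (fnorm : ℝ)
    (hf : ∀ x a μ μ', IsProb μ → IsProb μ' → |f x a μ μ'| ≤ fnorm)
    (p : X → A → (X → ℝ) → (X → ℝ) → X → ℝ)
    (hp0 : ∀ x a μ μ' x', IsProb μ → IsProb μ' → 0 ≤ p x a μ μ' x')
    (hp1 : ∀ x a μ μ', IsProb μ → IsProb μ' → ∑ x', p x a μ μ' x' = 1)
    (cmin : ℝ)
    (hcmin : ∀ x a μ μ' x', IsProb μ → IsProb μ' → cmin ≤ p x a μ μ' x')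
    (Lfloc Lpglob Lploc : ℝ)
    (hLfloc0 : 0 ≤ Lfloc) (hLpglob0 : 0 ≤ Lpglob) (hLploc0 : 0 ≤ Lploc)
    (hLfloc : ∀ x a μ μ' μ'₁, IsProb μ → IsProb μ' → IsProb μ'₁ →
      |f x a μ μ' - f x a μ μ'₁| ≤ Lfloc * l1 (fun y => μ' y - μ'₁ y))
    (hLploc : ∀ x a μ μ' μ'₁, IsProb μ → IsProb μ' → IsProb μ'₁ →
      ∑ x', |p x a μ μ' x' - p x a μ μ'₁ x'| ≤ Lploc * l1 (fun y => μ' y - μ'₁ y))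
    (hLpc : Lpglob + Lploc < (Fintype.card X : ℝ) * cmin)
    (φ : ℝ) (hφ0 : 0 < φ)
    (hφsmall : φ * (Fintype.card A : ℝ) * (Lfloc + (γ / (1 - γ)) * Lploc * fnorm)
        / ((Fintype.card X : ℝ) * cmin - Lploc) < 1 - γ)
    -- μ'*_{Q,μ} : the unique fixed point of μ' ↦ μ'P^{Q,μ,μ'}
    (mups : (X → A → ℝ) → (X → ℝ) → X → ℝ)
    (hmups : ∀ (Q : X → A → ℝ) (μ : X → ℝ), IsProb μ →
      IsProb (mups Q μ) ∧
        Ppush3 p (fun x1 => softmin φ (Q x1)) μ (mups Q μ) (mups Q μ) = mups Q μ)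
    -- the contraction constant
    (k : ℝ)
    (hkdef : k = γ + (Lfloc + (γ / (1 - γ)) * Lploc * fnorm) * φ * (Fintype.card A : ℝ)
        / ((Fintype.card X : ℝ) * cmin - Lploc)) :
    (∀ (μ : X → ℝ), IsProb μ → ∀ Q : X → A → ℝ, supQ Q ≤ fnorm / (1 - γ) →
        supQ (bell3 f p γ μ (mups Q μ) Q) ≤ fnorm / (1 - γ))
    ∧ (∀ (μ : X → ℝ), IsProb μ → ∀ Q Q' : X → A → ℝ,
        supQ Q ≤ fnorm / (1 - γ) → supQ Q' ≤ fnorm / (1 - γ) →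
        supQ (fun x a => bell3 f p γ μ (mups Q μ) Q x a - bell3 f p γ μ (mups Q' μ) Q' x a)
          ≤ k * supQ (fun x a => Q x a - Q' x a))
    ∧ k < 1
    ∧ (∀ (μ : X → ℝ), IsProb μ →
        ∃! Qs : X → A → ℝ, supQ Qs ≤ fnorm / (1 - γ) ∧
          bell3 f p γ μ (mups Qs μ) Qs = Qs) := by
  have hden : 0 < Fintype.card X * cmin - Lploc := by linarith
  have hfnorm : 0 ≤ fnorm := (abs_nonneg _).trans
    (hf (Classical.arbitrary X) (Classical.arbitrary A) _ _ isProb_const_inv_card isProb_const_inv_card)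
  have hR : 0 ≤ fnorm / (1 - γ) := div_nonneg hfnorm (by linarith)
  have hk1 : k < 1 := by
    have : k - γ = φ * Fintype.card A * (Lfloc + γ / (1 - γ) * Lploc * fnorm)
        / (Fintype.card X * cmin - Lploc) := by rw [hkdef]; ring
    linarith
  have hprob : ∀ μ ν, IsProb μ → IsProb ν → ∀ x a, IsProb (p x a μ ν) :=
    fun μ ν hμ hν x a => ⟨fun x' => hp0 x a μ ν x' hμ hν, hp1 x a μ ν hμ hν⟩
  have hmaps : ∀ μ, IsProb μ → ∀ Q : X → A → ℝ, ‖Q‖ ≤ fnorm / (1 - γ) →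
      ‖bell3 f p γ μ (mups Q μ) Q‖ ≤ fnorm / (1 - γ) := fun μ hμ Q hQ =>
    norm_bell3_le hγ0.le hγ1 (fun x a => hf x a μ _ hμ (hmups Q μ hμ).1)
      (hprob μ _ hμ (hmups Q μ hμ).1) hQ
  have hlip : ∀ μ, IsProb μ → ∀ Q Q' : X → A → ℝ, ‖Q‖ ≤ fnorm / (1 - γ) →
      ‖Q'‖ ≤ fnorm / (1 - γ) →
      ‖bell3 f p γ μ (mups Q μ) Q - bell3 f p γ μ (mups Q' μ) Q'‖ ≤ k * ‖Q - Q'‖ := by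
    intro μ hμ Q Q' _ hQ'
    obtain ⟨hν, hfix⟩ := hmups Q μ hμ
    obtain ⟨hν', hfix'⟩ := hmups Q' μ hμ
    have hG : l1 (fun y => mups Q μ y - mups Q' μ y)
        ≤ φ * Fintype.card A * ‖Q - Q'‖ / (Fintype.card X * cmin - Lploc) := by
      rw [le_div_iff₀ hden, mul_comm]
      exact mul_l1_sub_le_of_Ppush3_eq hφ0.le hp0 hp1 hcmin hLploc hμ hν hν' hfix hfix'
    calc _ ≤ γ * ‖Q - Q'‖ + (Lfloc + γ * Lploc * ‖Q'‖) * l1 (fun y => mups Q μ y - mups Q' μ y) :=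
          norm_bell3_sub_le hγ0.le (hprob μ _ hμ hν) (fun x a => hLfloc x a μ _ _ hμ hν hν')
            (fun x a => hLploc x a μ _ _ hμ hν hν') Q Q'
      _ ≤ γ * ‖Q - Q'‖ + (Lfloc + γ * Lploc * (fnorm / (1 - γ)))
          * (φ * Fintype.card A * ‖Q - Q'‖ / (Fintype.card X * cmin - Lploc)) := by
          gcongr
          exact l1_nonneg _
      _ = k * ‖Q - Q'‖ := by rw [hkdef]; ring
  simp only [supQ_eq_norm]
  exact ⟨hmaps, hlip, hk1, fun μ hμ =>
    existsUnique_fixedPoint_of_norm_le hR hk1 (hmaps μ hμ) (hlip μ hμ)⟩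

/-- Q fixed point for MFCG at a frozen global distribution μ: the map
Q ↦ B_{μ,μ'*_{Q,μ}} Q maps the ball ‖Q‖∞ ≤ ‖f‖∞/(1−γ) into itself and is a strict
contraction there with constant
k = γ + (L_f^loc + (γ/(1−γ))L_p^loc‖f‖∞)·φ|𝒜|/(|𝒳|c_min − L_p^loc) < 1; hence it has a
unique fixed point Q*_μ in the ball. -/
theorem mfcg_Q_fixed_point [Fintype X] [Fintype A] [Nonempty X] [Nonempty A]
    (γ : ℝ) (hγ0 : 0 < γ) (hγ1 : γ < 1)
    (f : X → A → (X → ℝ) → (X → ℝ) → ℝ) (fnorm : ℝ)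
    (hf : ∀ x a μ μ', IsProb μ → IsProb μ' → |f x a μ μ'| ≤ fnorm)
    (p : X → A → (X → ℝ) → (X → ℝ) → X → ℝ)
    (hp0 : ∀ x a μ μ' x', IsProb μ → IsProb μ' → 0 ≤ p x a μ μ' x')
    (hp1 : ∀ x a μ μ', IsProb μ → IsProb μ' → ∑ x', p x a μ μ' x' = 1)
    (cmin : ℝ) (hcmin0 : 0 ≤ cmin)
    (hcmin : ∀ x a μ μ' x', IsProb μ → IsProb μ' → cmin ≤ p x a μ μ' x')
    (Lfglob Lfloc Lpglob Lploc : ℝ)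
    (hLfglob0 : 0 ≤ Lfglob) (hLfloc0 : 0 ≤ Lfloc) (hLpglob0 : 0 ≤ Lpglob) (hLploc0 : 0 ≤ Lploc)
    (hLfglob : ∀ x a μ μ₁ μ', IsProb μ → IsProb μ₁ → IsProb μ' →
      |f x a μ μ' - f x a μ₁ μ'| ≤ Lfglob * l1 (fun y => μ y - μ₁ y))
    (hLfloc : ∀ x a μ μ' μ'₁, IsProb μ → IsProb μ' → IsProb μ'₁ →
      |f x a μ μ' - f x a μ μ'₁| ≤ Lfloc * l1 (fun y => μ' y - μ'₁ y))
    (hLpglob : ∀ x a μ μ₁ μ', IsProb μ → IsProb μ₁ → IsProb μ' →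
      ∑ x', |p x a μ μ' x' - p x a μ₁ μ' x'| ≤ Lpglob * l1 (fun y => μ y - μ₁ y))
    (hLploc : ∀ x a μ μ' μ'₁, IsProb μ → IsProb μ' → IsProb μ'₁ →
      ∑ x', |p x a μ μ' x' - p x a μ μ'₁ x'| ≤ Lploc * l1 (fun y => μ' y - μ'₁ y))
    (hLpc : Lpglob + Lploc < (Fintype.card X : ℝ) * cmin)
    (φ : ℝ) (hφ0 : 0 < φ)
    (hφsmall : φ * (Fintype.card A : ℝ) * (Lfloc + (γ / (1 - γ)) * Lploc * fnorm)
        / ((Fintype.card X : ℝ) * cmin - Lploc) < 1 - γ)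
    -- μ'*_{Q,μ} : the unique fixed point of μ' ↦ μ'P^{Q,μ,μ'}
    (mups : (X → A → ℝ) → (X → ℝ) → X → ℝ)
    (hmups : ∀ (Q : X → A → ℝ) (μ : X → ℝ), IsProb μ →
      IsProb (mups Q μ) ∧
        Ppush3 p (fun x1 => softmin φ (Q x1)) μ (mups Q μ) (mups Q μ) = mups Q μ)
    -- the contraction constant
    (k : ℝ)
    (hkdef : k = γ + (Lfloc + (γ / (1 - γ)) * Lploc * fnorm) * φ * (Fintype.card A : ℝ)
        / ((Fintype.card X : ℝ) * cmin - Lploc)) :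
    (∀ (μ : X → ℝ), IsProb μ → ∀ Q : X → A → ℝ, supQ Q ≤ fnorm / (1 - γ) →
        supQ (bell3 f p γ μ (mups Q μ) Q) ≤ fnorm / (1 - γ))
    ∧ (∀ (μ : X → ℝ), IsProb μ → ∀ Q Q' : X → A → ℝ,
        supQ Q ≤ fnorm / (1 - γ) → supQ Q' ≤ fnorm / (1 - γ) →
        supQ (fun x a => bell3 f p γ μ (mups Q μ) Q x a - bell3 f p γ μ (mups Q' μ) Q' x a)
          ≤ k * supQ (fun x a => Q x a - Q' x a))
    ∧ k < 1
    ∧ (∀ (μ : X → ℝ), IsProb μ →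
        ∃! Qs : X → A → ℝ, supQ Qs ≤ fnorm / (1 - γ) ∧
          bell3 f p γ μ (mups Qs μ) Qs = Qs) :=
  mfcg_Q_fixed_point_general γ hγ0 hγ1 f fnorm hf p hp0 hp1 cmin hcmin Lfloc Lpglob Lploc hLfloc0
    hLpglob0 hLploc0 hLfloc hLploc hLpc φ hφ0 hφsmall mups hmups k hkdef
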